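/- For all integers s, t ≥ 3, the derivative of the chromatic polynomial of Y(s,t) evaluated at x = 2 equals 2((-1)^s + (-1)^t + (-1)^{s+t}). -/

import Mathlib

/-
Colour `v₁` and `v₄` first (distinct colours), then `v₀`. Given these, the rest splits into two
independent parts: `v₃` avoids the colour of `v₄` and every vertex of `S` avoids the colours of
`v₀, v₁, v₃`; symmetrically `v₂` avoids the colour of `v₁` and every vertex of `T` avoids those of
`v₀, v₄, v₂`. Counting according to whether `v₀` repeats the colour of `v₁`, of `v₄` or neither
gives the chromatic polynomial `x(x-1)(A_s B_t + B_s A_t + (x-2) C_s C_t)` with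
`A_n = (x-1)^n + (x-2)^(n+1)`, `B_n = (x-2)^n + (x-2)(x-3)^n`, `C_n = 2(x-2)^n + (x-3)^(n+1)`.
At `x = 2` (and `n ≥ 2`) we have `A_n = 1`, `B_n = 0`, `B_n' = (-1)^n` and `C_n = (-1)^(n+1)`.
-/

/-- The number of proper colorings of `G` with a palette of `k` colors. -/
noncomputable def numColorings {V : Type} [Fintype V] (G : SimpleGraph V) (k : ℕ) : ℕ :=
  Nat.card {f : V → Fin k // ∀ u v, G.Adj u v → f u ≠ f v}

/-- `P` is the chromatic polynomial of `G`: for every natural number `k`, evaluating `P`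
at `k` gives the number of proper `k`-colorings of `G`. -/
def IsChromaticPolynomial {V : Type} [Fintype V] (G : SimpleGraph V) (P : Polynomial ℝ) : Prop :=
  ∀ k : ℕ, P.eval (k : ℝ) = numColorings G k

/-- The adjacency-generating relation of the graph `X(s,t)`: the vertices `v0, v1, v2, v3, v4`
are `Sum.inl 0, …, Sum.inl 4`, the independent set `S` is `Fin s` (as `Sum.inr (Sum.inl _)`)
and the independent set `T` is `Fin t` (as `Sum.inr (Sum.inr _)`).  The edges are: `v1v2`,
`v3v4`, every vertex of `S` joined to each of `v0, v1, v3`, and every vertex of `T` joined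
to each of `v0, v2, v4`. -/
def XAdj (s t : ℕ) (x y : Fin 5 ⊕ Fin s ⊕ Fin t) : Prop :=
  (x = Sum.inl 1 ∧ y = Sum.inl 2) ∨ (x = Sum.inl 3 ∧ y = Sum.inl 4) ∨
    ((∃ i : Fin s, x = Sum.inr (Sum.inl i)) ∧ (y = Sum.inl 0 ∨ y = Sum.inl 1 ∨ y = Sum.inl 3)) ∨
    ((∃ j : Fin t, x = Sum.inr (Sum.inr j)) ∧ (y = Sum.inl 0 ∨ y = Sum.inl 2 ∨ y = Sum.inl 4))

/-- The graph `X(s,t)`. -/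
def graphX (s t : ℕ) : SimpleGraph (Fin 5 ⊕ Fin s ⊕ Fin t) :=
  SimpleGraph.fromRel (XAdj s t)

/-- The adjacency-generating relation of `Y(s,t)`: that of `X(s,t)` together with the
extra edge `v1v4`. -/
def YAdj (s t : ℕ) (x y : Fin 5 ⊕ Fin s ⊕ Fin t) : Prop :=
  XAdj s t x y ∨ (x = Sum.inl 1 ∧ y = Sum.inl 4)

/-- The graph `Y(s,t)`, obtained from `X(s,t)` by joining `v1` and `v4`. -/
def graphY (s t : ℕ) : SimpleGraph (Fin 5 ⊕ Fin s ⊕ Fin t) :=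
  SimpleGraph.fromRel (YAdj s t)

open Finset Polynomial

section Counting

variable {α : Type*} [Fintype α] [DecidableEq α]

lemma cast_card_compl (A : Finset α) : ((#Aᶜ : ℕ) : ℝ) = Fintype.card α - #A := by
  rw [card_compl, Nat.cast_sub (card_le_univ A)]

lemma sum_compl_card_insert {M : Type*} [AddCommMonoid M] (D E : Finset α) (h : ℕ → M) :
    ∑ x ∈ Eᶜ, h #(insert x D) = #(D \ E) • h #D + #(D ∪ E)ᶜ • h (#D + 1) := by
  rw [← sum_filter_add_sum_filter_not Eᶜ (· ∈ D)]
  have hin : Eᶜ.filter (· ∈ D) = D \ E := by ext; simp [and_comm]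
  have hout : Eᶜ.filter (· ∉ D) = (D ∪ E)ᶜ := by ext; simp [and_comm]
  rw [hin, hout]
  congr 1
  · rw [← sum_const]
    exact sum_congr rfl fun x hx => by rw [insert_eq_of_mem (mem_sdiff.1 hx).1]
  · rw [← sum_const]
    exact sum_congr rfl fun x hx => by rw [card_insert_of_notMem (by simp_all)]

lemma card_forall_notMem (ι : Type*) [Fintype ι] [DecidableEq ι] (A : Finset α) :
    Fintype.card {σ : ι → α // ∀ i, σ i ∉ A} = #Aᶜ ^ Fintype.card ι := by
  rw [Fintype.card_congr (Equiv.subtypePiEquivPi (β := fun _ => α) (p := fun _ x => x ∉ A)),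
    Fintype.card_fun, Fintype.card_subtype_compl, Fintype.card_coe, card_compl]

end Counting

section Sides

variable {α : Type*} [Fintype α] [DecidableEq α] (ι : Type*) [Fintype ι] [DecidableEq ι]

-- A colour `x ≠ d` for a middle vertex, and colours for an independent set whose vertices see
-- the middle vertex and two vertices coloured `a` and `b`.
def SideColoring (a b d : α) : Type _ :=
  Σ x : ({d}ᶜ : Finset α), {σ : ι → α // ∀ i, σ i ∉ ({(x : α), a, b} : Finset α)}

instance (a b d : α) : Fintype (SideColoring ι a b d) := by
  unfold SideColoring; infer_instance

lemma card_sideColoring (a b d : α) :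
    (Fintype.card (SideColoring ι a b d) : ℝ) =
      #({a, b} \ {d}) * ((Fintype.card α : ℝ) - #{a, b}) ^ Fintype.card ι +
        ((Fintype.card α : ℝ) - #({a, b} ∪ {d})) *
          ((Fintype.card α : ℝ) - (#{a, b} + 1 : ℕ)) ^ Fintype.card ι := by
  simp only [SideColoring, Fintype.card_sigma, card_forall_notMem, Nat.cast_sum, Nat.cast_pow,
    cast_card_compl]
  rw [Finset.sum_coe_sort {d}ᶜ fun x => ((Fintype.card α : ℝ) - #{x, a, b}) ^ Fintype.card ι,
    sum_compl_card_insert {a, b} {d} fun m => ((Fintype.card α : ℝ) - m) ^ Fintype.card ι,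
    nsmul_eq_mul, nsmul_eq_mul, cast_card_compl]

lemma card_sideColoring_self_left {b d : α} (h : b ≠ d) :
    (Fintype.card (SideColoring ι b b d) : ℝ) =
      ((Fintype.card α : ℝ) - 1) ^ Fintype.card ι +
        ((Fintype.card α : ℝ) - 2) * ((Fintype.card α : ℝ) - 2) ^ Fintype.card ι := by
  rw [card_sideColoring]
  simp [h, h.symm, sdiff_singleton_eq_erase, erase_eq_of_notMem]

lemma card_sideColoring_self_right {b d : α} (h : b ≠ d) :
    (Fintype.card (SideColoring ι d b d) : ℝ) =
      ((Fintype.card α : ℝ) - 2) ^ Fintype.card ι +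
        ((Fintype.card α : ℝ) - 2) * ((Fintype.card α : ℝ) - 3) ^ Fintype.card ι := by
  rw [card_sideColoring]
  simp [h, h.symm, sdiff_singleton_eq_erase, erase_eq_of_notMem]

lemma card_sideColoring_of_ne {a b d : α} (hab : a ≠ b) (had : a ≠ d) (hbd : b ≠ d) :
    (Fintype.card (SideColoring ι a b d) : ℝ) =
      2 * ((Fintype.card α : ℝ) - 2) ^ Fintype.card ι +
        ((Fintype.card α : ℝ) - 3) * ((Fintype.card α : ℝ) - 3) ^ Fintype.card ι := by
  rw [card_sideColoring]
  simp [hab, had, hbd, had.symm, hbd.symm, sdiff_singleton_eq_erase, erase_eq_of_notMem,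
    card_insert_of_notMem]

end Sides

lemma graphY_proper_iff {s t : ℕ} {α : Type*} (f : Fin 5 ⊕ Fin s ⊕ Fin t → α) :
    (∀ u v, (graphY s t).Adj u v → f u ≠ f v) ↔
      f (.inl 4) ≠ f (.inl 1) ∧
      (f (.inl 3) ≠ f (.inl 4) ∧ ∀ i, f (.inr (.inl i)) ≠ f (.inl 3) ∧
        f (.inr (.inl i)) ≠ f (.inl 0) ∧ f (.inr (.inl i)) ≠ f (.inl 1)) ∧
      (f (.inl 2) ≠ f (.inl 1) ∧ ∀ j, f (.inr (.inr j)) ≠ f (.inl 2) ∧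
        f (.inr (.inr j)) ≠ f (.inl 0) ∧ f (.inr (.inr j)) ≠ f (.inl 4)) := by
  simp only [graphY, SimpleGraph.fromRel_adj, YAdj, XAdj]
  constructor
  · intro h
    refine ⟨(h _ _ ?_).symm, ⟨h _ _ ?_, fun i => ⟨h _ _ ?_, h _ _ ?_, h _ _ ?_⟩⟩,
      (h _ _ ?_).symm, fun j => ⟨h _ _ ?_, h _ _ ?_, h _ _ ?_⟩⟩ <;> simp
  · rintro ⟨h14, ⟨h34, hS⟩, h12, hT⟩ u v ⟨-, huv | huv⟩ <;>
      rcases huv with ⟨rfl, rfl⟩ | ⟨rfl, rfl⟩ | ⟨⟨i, rfl⟩, rfl | rfl | rfl⟩ |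
        ⟨⟨j, rfl⟩, rfl | rfl | rfl⟩ | ⟨rfl, rfl⟩ <;> grind

def graphYColoringEquiv (s t : ℕ) (α : Type*) [Fintype α] [DecidableEq α] :
    {f : Fin 5 ⊕ Fin s ⊕ Fin t → α // ∀ u v, (graphY s t).Adj u v → f u ≠ f v} ≃
      Σ (x₁ : α) (x₄ : ({x₁}ᶜ : Finset α)) (x₀ : α),
        SideColoring (Fin s) x₀ x₁ x₄ × SideColoring (Fin t) x₀ x₄ x₁ where
  toFun f :=
    have hf := (graphY_proper_iff f.1).1 f.2
    ⟨f.1 (.inl 1), ⟨f.1 (.inl 4), by simpa using hf.1⟩, f.1 (.inl 0),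
      ⟨⟨f.1 (.inl 3), by simpa using hf.2.1.1⟩, fun i => f.1 (.inr (.inl i)),
        fun i => by simpa using hf.2.1.2 i⟩,
      ⟨⟨f.1 (.inl 2), by simpa using hf.2.2.1⟩, fun j => f.1 (.inr (.inr j)),
        fun j => by simpa using hf.2.2.2 j⟩⟩
  invFun c := ⟨Sum.elim ![c.2.2.1, c.1, c.2.2.2.2.1, c.2.2.2.1.1, c.2.1]
      (Sum.elim c.2.2.2.1.2.1 c.2.2.2.2.2.1), by
    obtain ⟨x₁, ⟨x₄, h₄⟩, x₀, ⟨⟨x₃, h₃⟩, σ, hσ⟩, ⟨⟨x₂, h₂⟩, τ, hτ⟩⟩ := c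
    simp only [mem_compl, mem_singleton, mem_insert, not_or] at h₄ h₃ h₂ hσ hτ
    exact (graphY_proper_iff _).2 ⟨h₄, ⟨h₃, hσ⟩, h₂, hτ⟩⟩
  left_inv f := by
    ext v
    rcases v with i | i | j
    · fin_cases i <;> rfl
    · rfl
    · rfl
  right_inv c := rfl

lemma sum_card_sideColoring_mul {α : Type*} [Fintype α] [DecidableEq α] (s t : ℕ) {x₁ x₄ : α}
    (h : x₁ ≠ x₄) :
    ∑ x₀, (Fintype.card (SideColoring (Fin s) x₀ x₁ x₄) : ℝ) *
        Fintype.card (SideColoring (Fin t) x₀ x₄ x₁) =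
      let k : ℝ := Fintype.card α
      ((k - 1) ^ s + (k - 2) ^ (s + 1)) * ((k - 2) ^ t + (k - 2) * (k - 3) ^ t) +
        ((k - 2) ^ s + (k - 2) * (k - 3) ^ s) * ((k - 1) ^ t + (k - 2) ^ (t + 1)) +
        (k - 2) * (2 * (k - 2) ^ s + (k - 3) ^ (s + 1)) *
          (2 * (k - 2) ^ t + (k - 3) ^ (t + 1)) := by
  have hne : ∀ x₀ ∈ ({x₁, x₄} : Finset α)ᶜ, x₀ ≠ x₁ ∧ x₀ ≠ x₄ := by simp
  rw [← sum_add_sum_compl {x₁, x₄}, sum_pair h, card_sideColoring_self_left (Fin s) h,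
    card_sideColoring_self_right (Fin t) h.symm, card_sideColoring_self_right (Fin s) h,
    card_sideColoring_self_left (Fin t) h.symm, sum_congr rfl fun x₀ hx₀ => by
      rw [card_sideColoring_of_ne (Fin s) (hne x₀ hx₀).1 (hne x₀ hx₀).2 h,
        card_sideColoring_of_ne (Fin t) (hne x₀ hx₀).2 (hne x₀ hx₀).1 h.symm],
    sum_const, nsmul_eq_mul, cast_card_compl, card_pair h]
  simp only [Fintype.card_fin]
  push_cast
  ring

-- The three summands count the colourings in which `v₀` takes the colour of `v₁`, of `v₄`,
-- or a third colour.
noncomputable def chromaticPolyY (s t : ℕ) : ℝ[X] :=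
  X * (X - 1) *
    (((X - 1) ^ s + (X - 2) ^ (s + 1)) * ((X - 2) ^ t + (X - 2) * (X - 3) ^ t) +
      ((X - 2) ^ s + (X - 2) * (X - 3) ^ s) * ((X - 1) ^ t + (X - 2) ^ (t + 1)) +
      (X - 2) * (2 * (X - 2) ^ s + (X - 3) ^ (s + 1)) *
        (2 * (X - 2) ^ t + (X - 3) ^ (t + 1)))

lemma isChromaticPolynomial_graphY (s t : ℕ) :
    IsChromaticPolynomial (graphY s t) (chromaticPolyY s t) := by
  intro k
  rw [numColorings, Nat.card_congr (graphYColoringEquiv s t (Fin k)), Nat.card_eq_fintype_card]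
  simp only [Fintype.card_sigma, Fintype.card_prod, Nat.cast_sum, Nat.cast_mul]
  rw [sum_congr rfl fun x₁ _ => sum_congr rfl fun x₄ _ =>
    sum_card_sideColoring_mul s t fun h => mem_compl.1 x₄.2 (mem_singleton.2 h.symm)]
  simp only [chromaticPolyY, eval_mul, eval_X, eval_sub, eval_one, eval_add, eval_pow, eval_ofNat,
    univ_eq_attach, Fintype.card_fin, sum_const, card_attach, smul_add, nsmul_eq_mul,
    cast_card_compl, card_singleton, Nat.cast_one, card_univ]
  ring

lemma IsChromaticPolynomial.unique {V : Type} [Fintype V] {G : SimpleGraph V} {P Q : ℝ[X]}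
    (hP : IsChromaticPolynomial G P) (hQ : IsChromaticPolynomial G Q) : P = Q :=
  eq_of_infinite_eval_eq P Q <|
    Set.infinite_of_injective_forall_mem Nat.cast_injective fun k => (hP k).trans (hQ k).symm

lemma derivative_chromaticPolyY_eval_two {s t : ℕ} (hs : 2 ≤ s) (ht : 2 ≤ t) :
    (derivative (chromaticPolyY s t)).eval 2 =
      2 * ((-1 : ℝ) ^ s + (-1 : ℝ) ^ t + (-1 : ℝ) ^ (s + t)) := by
  simp only [chromaticPolyY, derivative_mul, derivative_add, derivative_sub, derivative_pow,
    derivative_X, derivative_ofNat, derivative_one, eval_add, eval_mul, eval_sub, eval_pow,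
    eval_X, eval_ofNat, eval_one, eval_zero]
  norm_num [zero_pow (by omega : s ≠ 0), zero_pow (by omega : t ≠ 0),
    zero_pow (by omega : s - 1 ≠ 0), zero_pow (by omega : t - 1 ≠ 0)]
  ring

/-- For all `s, t ≥ 3`, the derivative of the chromatic polynomial of `Y(s,t)` evaluated at
`x = 2` equals `2((-1)^s + (-1)^t + (-1)^(s+t))`. -/
theorem derivative_chromaticPolynomial_graphY_at_two (s t : ℕ) (hs : 3 ≤ s) (ht : 3 ≤ t)
    (P : Polynomial ℝ) (hP : IsChromaticPolynomial (graphY s t) P) :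
    (Polynomial.derivative P).eval 2 =
      2 * ((-1 : ℝ) ^ s + (-1 : ℝ) ^ t + (-1 : ℝ) ^ (s + t)) := by
  rw [hP.unique (isChromaticPolynomial_graphY s t),
    derivative_chromaticPolyY_eval_two (by omega) (by omega)]
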